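/- arXiv:2507.10555 — 3 statements merged into one kernel-verified Lean document; each statement's English description precedes it below -/
import Mathlib

section
/- Let P(x) be a monic polynomial of degree d with non-negative coefficients and P(0) = 1, and let P*(x) := x^d·P(1/x) be the polynomial with reversed coefficients. Then for all x > 0, L̃_P(x) + L̃_{P*}(1/x) = lim_{t→∞} L̃_P(t), where L̃_P denotes the Rogers dilogarithm of higher degree associated to P. -/
open Real intervalIntegral

/-- The Rogers dilogarithm of higher degree associated to a function `P`. -/
noncomputable def LP (P : ℝ → ℝ) (x : ℝ) : ℝ :=
  (∫ y in (0:ℝ)..x, Real.log (P y) / y) - (1/2) * Real.log x * Real.log (P x)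

/-!
With `P* = reverse P` and `I_Q(x) = ∫₀ˣ log Q(y) / y dy`, the identity
`log P*(1/x) = log P(x) - d log x` turns `L̃_P(x) + L̃_{P*}(1/x)` into
`I_P(x) + I_{P*}(1/x) - (d/2) log² x`, whose derivative on `(0, ∞)` is
`(log P(x) - log P*(1/x) - d log x) / x = 0`; so the sum is constant there.
As `x → ∞`, `L̃_{P*}(1/x) → 0`: writing `Q = 1 + y Q₁` with `Q₁` of nonnegative coefficients,
`0 ≤ log Q(y) ≤ Q(y) - 1 ≤ y Q₁(s)` on `[0, s]`, so both terms of `L̃_Q(s)` are `O(s |log s|)`.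
Hence the constant is `lim L̃_P`.
-/

open Polynomial Set Filter Topology MeasureTheory

lemma LP_congr {f g : ℝ → ℝ} (h : ∀ u ≠ 0, f u = g u) : LP f = LP g := by
  funext x
  have hlog : ∀ y, log (f y) / y = log (g y) / y := fun y => by
    rcases eq_or_ne y 0 with rfl | hy
    · simp
    · rw [h y hy]
  rcases eq_or_ne x 0 with rfl | hx
  · simp [LP]
  · simp only [LP, hlog, h x hx]

namespace Polynomial

variable {S P : ℝ[X]}

lemma eval_nonneg_of_coeff_nonneg (hS : ∀ i, 0 ≤ S.coeff i) {y : ℝ} (hy : 0 ≤ y) :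
    0 ≤ S.eval y := by
  rw [eval_eq_sum_range]
  exact Finset.sum_nonneg fun i _ => mul_nonneg (hS i) (pow_nonneg hy i)

lemma eval_mono_of_coeff_nonneg (hS : ∀ i, 0 ≤ S.coeff i) {a b : ℝ} (ha : 0 ≤ a)
    (hab : a ≤ b) : S.eval a ≤ S.eval b := by
  rw [eval_eq_sum_range, eval_eq_sum_range]
  exact Finset.sum_le_sum fun i _ => mul_le_mul_of_nonneg_left (pow_le_pow_left₀ ha hab i) (hS i)

lemma divX_coeff_nonneg (hS : ∀ i, 0 ≤ S.coeff i) (i : ℕ) : 0 ≤ S.divX.coeff i :=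
  coeff_divX (p := S) ▸ hS (i + 1)

lemma eval_eq_mul_eval_divX_add_one (hS0 : S.coeff 0 = 1) (y : ℝ) :
    S.eval y = y * S.divX.eval y + 1 := by
  conv_lhs => rw [← X_mul_divX_add S]
  simp [hS0]

lemma one_le_eval (hS : ∀ i, 0 ≤ S.coeff i) (hS0 : S.coeff 0 = 1) {y : ℝ} (hy : 0 ≤ y) :
    1 ≤ S.eval y := by
  have := eval_nonneg_of_coeff_nonneg (divX_coeff_nonneg hS) hy
  rw [eval_eq_mul_eval_divX_add_one hS0]
  nlinarith

lemma log_eval_le (hS : ∀ i, 0 ≤ S.coeff i) (hS0 : S.coeff 0 = 1) {y x : ℝ} (hy : 0 ≤ y)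
    (hyx : y ≤ x) : log (S.eval y) ≤ y * S.divX.eval x :=
  calc log (S.eval y) ≤ S.eval y - 1 :=
        log_le_sub_one_of_pos (by linarith [one_le_eval hS hS0 hy])
    _ = y * S.divX.eval y := by rw [eval_eq_mul_eval_divX_add_one hS0]; ring
    _ ≤ y * S.divX.eval x := by
        gcongr
        exact eval_mono_of_coeff_nonneg (divX_coeff_nonneg hS) hy hyx

lemma abs_log_eval_div_le (hS : ∀ i, 0 ≤ S.coeff i) (hS0 : S.coeff 0 = 1) {y x : ℝ}
    (hy : 0 < y) (hyx : y ≤ x) : |log (S.eval y) / y| ≤ S.divX.eval x := by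
  rw [abs_div, abs_of_nonneg (log_nonneg (one_le_eval hS hS0 hy.le)), abs_of_pos hy,
    div_le_iff₀ hy, mul_comm]
  exact log_eval_le hS hS0 hy.le hyx

lemma continuousOn_log_eval_div (hS : ∀ i, 0 ≤ S.coeff i) (hS0 : S.coeff 0 = 1) :
    ContinuousOn (fun y => log (S.eval y) / y) (Ioi 0) :=
  (S.continuous.continuousOn.log fun _ hy =>
    (one_pos.trans_le (one_le_eval hS hS0 hy.le)).ne').div continuousOn_id
    fun _ hy => ne_of_gt hy

lemma intervalIntegrable_log_eval_div (hS : ∀ i, 0 ≤ S.coeff i) (hS0 : S.coeff 0 = 1) {x : ℝ}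
    (hx : 0 ≤ x) : IntervalIntegrable (fun y => log (S.eval y) / y) volume 0 x := by
  rw [intervalIntegrable_iff_integrableOn_Ioc_of_le hx]
  refine Measure.integrableOn_of_bounded (M := S.divX.eval x) measure_Ioc_lt_top.ne
    ((measurable_log.comp S.continuous.measurable).div measurable_id).aestronglyMeasurable ?_
  rw [ae_restrict_iff' measurableSet_Ioc]
  exact ae_of_all _ fun y hy => abs_log_eval_div_le hS hS0 hy.1 hy.2

lemma hasDerivAt_integral_log_eval_div (hS : ∀ i, 0 ≤ S.coeff i) (hS0 : S.coeff 0 = 1) {x : ℝ}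
    (hx : 0 < x) :
    HasDerivAt (fun x => ∫ y in (0 : ℝ)..x, log (S.eval y) / y)
      (log (S.eval x) / x) x :=
  integral_hasDerivAt_right (intervalIntegrable_log_eval_div hS hS0 hx.le)
    ((continuousOn_log_eval_div hS hS0).stronglyMeasurableAtFilter isOpen_Ioi x hx)
    ((continuousOn_log_eval_div hS hS0).continuousAt (Ioi_mem_nhds hx))

lemma abs_integral_log_eval_div_le (hS : ∀ i, 0 ≤ S.coeff i) (hS0 : S.coeff 0 = 1) {x : ℝ}
    (hx : 0 ≤ x) : |∫ y in (0 : ℝ)..x, log (S.eval y) / y| ≤ S.divX.eval x * x := by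
  have hbound : ∀ y ∈ uIoc 0 x, ‖log (S.eval y) / y‖ ≤ S.divX.eval x := fun y hy => by
    rw [uIoc_of_le hx] at hy
    exact abs_log_eval_div_le hS hS0 hy.1 hy.2
  simpa [abs_of_nonneg hx] using intervalIntegral.norm_integral_le_of_norm_le_const hbound

lemma coeff_reverse_nonneg (hP : ∀ i, 0 ≤ P.coeff i) (i : ℕ) : 0 ≤ P.reverse.coeff i :=
  coeff_reverse P i ▸ hP _

lemma eval_reverse_eq_pow_mul_eval_inv (P : ℝ[X]) {y : ℝ} (hy : y ≠ 0) :
    P.reverse.eval y = y ^ P.natDegree * P.eval y⁻¹ := by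
  let : Invertible y⁻¹ := invertibleOfNonzero (inv_ne_zero hy)
  have h := eval₂_reverse_mul_pow (RingHom.id ℝ) y⁻¹ P
  rw [invOf_eq_inv, inv_inv, eval₂_id, eval₂_id] at h
  rw [← h, inv_pow, mul_comm, mul_assoc, inv_mul_cancel₀ (pow_ne_zero _ hy), mul_one]

lemma log_eval_reverse_inv {x : ℝ} (hx : 0 < x) (hPx : 0 < P.eval x) :
    log (P.reverse.eval x⁻¹) = log (P.eval x) - P.natDegree * log x := by
  rw [eval_reverse_eq_pow_mul_eval_inv P (inv_ne_zero hx.ne'), inv_inv,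
    log_mul (by positivity) hPx.ne', log_pow, log_inv]
  ring

end Polynomial

lemma LP_pow_natDegree_mul_eval_inv (P : ℝ[X]) :
    LP (fun u => u ^ P.natDegree * P.eval u⁻¹) = LP fun u => P.reverse.eval u :=
  LP_congr fun _ hu => (eval_reverse_eq_pow_mul_eval_inv P hu).symm

lemma LP_add_LP_reverse_inv_eq {P : ℝ[X]} {x : ℝ} (hx : 0 < x) (hPx : 0 < P.eval x) :
    LP (fun u => P.eval u) x + LP (fun u => P.reverse.eval u) x⁻¹ =
      (∫ y in (0 : ℝ)..x, log (P.eval y) / y) +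
        (∫ y in (0 : ℝ)..x⁻¹, log (P.reverse.eval y) / y) -
        P.natDegree / 2 * log x ^ 2 := by
  simp only [LP, log_eval_reverse_inv hx hPx, log_inv]
  ring

lemma hasDerivAt_LP_add_LP_reverse_inv {P : ℝ[X]} (hPm : P.Monic) (hP : ∀ i, 0 ≤ P.coeff i)
    (hP0 : P.coeff 0 = 1) {x : ℝ} (hx : 0 < x) :
    HasDerivAt (fun x => LP (fun u => P.eval u) x + LP (fun u => P.reverse.eval u) x⁻¹) 0 x := by
  have hPpos : ∀ y, 0 < y → 0 < P.eval y := fun y hy =>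
    one_pos.trans_le (one_le_eval hP hP0 hy.le)
  have hIP := hasDerivAt_integral_log_eval_div hP hP0 hx
  have hIR := (hasDerivAt_integral_log_eval_div (coeff_reverse_nonneg hP) ((coeff_zero_reverse P).trans hPm)
    (inv_pos.2 hx)).comp x (hasDerivAt_inv hx.ne')
  have hlog := ((hasDerivAt_log hx.ne').pow 2).const_mul ((P.natDegree : ℝ) / 2)
  refine (((hIP.add hIR).sub hlog).congr_deriv ?_).congr_of_eventuallyEq ?_
  · rw [log_eval_reverse_inv hx (hPpos x hx)]
    field_simp
    ring
  · filter_upwards [Ioi_mem_nhds hx] with y hy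
    exact LP_add_LP_reverse_inv_eq hy (hPpos y hy)

lemma LP_add_LP_reverse_inv_eq_of_pos {P : ℝ[X]} (hPm : P.Monic) (hP : ∀ i, 0 ≤ P.coeff i)
    (hP0 : P.coeff 0 = 1) {x t : ℝ} (hx : 0 < x) (ht : 0 < t) :
    LP (fun u => P.eval u) x + LP (fun u => P.reverse.eval u) x⁻¹ =
      LP (fun u => P.eval u) t + LP (fun u => P.reverse.eval u) t⁻¹ :=
  isOpen_Ioi.is_const_of_deriv_eq_zero isPreconnected_Ioi
    (fun _ hy => (hasDerivAt_LP_add_LP_reverse_inv hPm hP hP0 hy).differentiableAt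
      |>.differentiableWithinAt)
    (fun _ hy => (hasDerivAt_LP_add_LP_reverse_inv hPm hP hP0 hy).deriv) hx ht

lemma tendsto_LP_eval_nhdsGT_zero {S : ℝ[X]} (hS : ∀ i, 0 ≤ S.coeff i) (hS0 : S.coeff 0 = 1) :
    Tendsto (LP fun u => S.eval u) (𝓝[>] 0) (𝓝 0) := by
  have hbound : ∀ s ∈ Ioi (0 : ℝ),
      ‖LP (fun u => S.eval u) s‖ ≤ (s + |s * log s|) * S.divX.eval s := fun s (hs : 0 < s) => by
    have hI := abs_integral_log_eval_div_le hS hS0 hs.le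
    have hlog := log_eval_le hS hS0 hs.le le_rfl
    have hlog0 := log_nonneg (one_le_eval hS hS0 hs.le)
    have hterm : |1 / 2 * log s * log (S.eval s)| ≤ |s * log s| * S.divX.eval s := by
      rw [abs_mul, abs_mul, abs_mul, abs_of_pos hs, abs_of_nonneg hlog0]
      nlinarith [abs_nonneg (log s)]
    calc ‖LP (fun u => S.eval u) s‖
        ≤ |∫ y in (0 : ℝ)..s, log (S.eval y) / y| +
          |1 / 2 * log s * log (S.eval s)| := abs_sub _ _
      _ ≤ (s + |s * log s|) * S.divX.eval s := by linarith
  have hcont : Tendsto (fun s => (s + |s * log s|) * S.divX.eval s) (𝓝 0) (𝓝 0) :=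
    ((continuous_id.add continuous_mul_log.abs).mul S.divX.continuous).tendsto' 0 0
      (by simp)
  exact squeeze_zero_norm' (eventually_nhdsWithin_of_forall hbound)
    (hcont.mono_left nhdsWithin_le_nhds)

/-- `L̃_P(x) + L̃_{P*}(1/x) = L̃_P(∞)` where `P*(x) = x^d·P(1/x)`. -/
theorem LP_add_LP_reverse (d : ℕ) (P : Polynomial ℝ) (hP : P.Monic)
    (hdeg : P.natDegree = d) (hcoeff : ∀ i, 0 ≤ P.coeff i) (h0 : P.coeff 0 = 1)
    (Linf : ℝ)
    (hlim : Filter.Tendsto (fun t => LP (fun u => P.eval u) t) Filter.atTop (nhds Linf))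
    (x : ℝ) (hx : 0 < x) :
    LP (fun u => P.eval u) x + LP (fun u => u ^ d * P.eval u⁻¹) (1 / x) = Linf := by
  subst hdeg
  rw [LP_pow_natDegree_mul_eval_inv, one_div]
  have hsum := hlim.add ((tendsto_LP_eval_nhdsGT_zero (coeff_reverse_nonneg hcoeff) ((coeff_zero_reverse P).trans hP)).comp
    tendsto_inv_atTop_nhdsGT_zero)
  rw [add_zero] at hsum
  refine tendsto_nhds_unique (tendsto_const_nhds.congr' ?_) hsum
  filter_upwards [eventually_gt_atTop 0] with t ht
  exact LP_add_LP_reverse_inv_eq_of_pos hP hcoeff h0 hx ht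
end

section
/- Let C be the multiplicative abelian group of differentiable functions ℝ_{>0} → ℝ_{>0}, and let y₁,…,y_M, p₁,…,p_M ∈ C and rational numbers c₁,…,c_M be such that ∑ₗ cₗ·(yₗ ∧ pₗ) = 0 in the rational wedge space ⋀²C. Then for all z > 0, ∑ₗ cₗ·(d/dz log yₗ(z))·log pₗ(z) = ∑ₗ cₗ·log yₗ(z)·(d/dz log pₗ(z)). -/
open TensorProduct

noncomputable section

/-- The multiplicative abelian group of differentiable functions `ℝ_{>0} → ℝ_{>0}`,
realized as the subgroup of `ℝ → ℝˣ` of functions which are differentiable and positive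
on `(0, ∞)`. -/
def Cgrp : Subgroup (ℝ → ℝˣ) where
  carrier := {f | DifferentiableOn ℝ (fun x => ((f x : ℝ))) (Set.Ioi 0) ∧
    ∀ x ∈ Set.Ioi (0:ℝ), (0:ℝ) < (f x : ℝ)}
  mul_mem' := by
    rintro f g ⟨hf, hfpos⟩ ⟨hg, hgpos⟩
    exact ⟨hf.mul hg, fun x hx => mul_pos (hfpos x hx) (hgpos x hx)⟩
  one_mem' := ⟨differentiableOn_const 1, fun x _ => one_pos⟩
  inv_mem' := by
    rintro f ⟨hf, hfpos⟩
    constructor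
    · have h : (fun x => (((f⁻¹) x : ℝˣ) : ℝ)) = fun x => ((f x : ℝ))⁻¹ := by
        funext x; simp
      rw [h]
      exact hf.inv (fun x hx => ne_of_gt (hfpos x hx))
    · intro x hx
      simpa using inv_pos.mpr (hfpos x hx)

/-- `Additive` version of `Cgrp`, a `ℤ`-module. -/
abbrev Agrp := Additive Cgrp

/-- The rationalized tensor square `ℚ ⊗_ℤ (C ⊗_ℤ C)`. -/
abbrev Vsp := ℚ ⊗[ℤ] (Agrp ⊗[ℤ] Agrp)

/-- The subspace generated by the symmetric elements `f ⊗ f`. -/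
def S2 : Submodule ℚ Vsp :=
  Submodule.span ℚ {v | ∃ f : Cgrp, v = (1:ℚ) ⊗ₜ[ℤ] (Additive.ofMul f ⊗ₜ[ℤ] Additive.ofMul f)}

/-- The wedge space `⋀² C`. -/
abbrev Wedge := Vsp ⧸ S2

/-- The wedge product `f ∧ g` in `⋀² C`. -/
def wedge (f g : Cgrp) : Wedge :=
  Submodule.Quotient.mk ((1:ℚ) ⊗ₜ[ℤ] (Additive.ofMul f ⊗ₜ[ℤ] Additive.ofMul g))

/-!
For fixed `z > 0`, both `f ↦ log f(z)` and `f ↦ (log f)'(z)` are homomorphisms `C → ℝ`, so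
`(f, g) ↦ (log f)'(z)·log g(z) - log f(z)·(log g)'(z)` is `ℤ`-bilinear and alternating. It
therefore induces a `ℚ`-linear functional on `⋀² C`, and applying it to `∑ cₗ (yₗ ∧ pₗ) = 0`
gives the identity.
-/

def wedgeLift {V : Type*} [AddCommGroup V] [Module ℚ V] (B : Agrp →ₗ[ℤ] Agrp →ₗ[ℤ] V)
    (hB : ∀ f, B f f = 0) : Wedge →ₗ[ℚ] V :=
  S2.liftQ ((TensorProduct.lift B).liftBaseChange ℚ) <| by
    rw [S2, Submodule.span_le]
    rintro _ ⟨f, rfl⟩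
    exact (LinearMap.liftBaseChange_tmul (A := ℚ) _ _ _).trans (by simp [hB])

theorem wedgeLift_wedge {V : Type*} [AddCommGroup V] [Module ℚ V]
    (B : Agrp →ₗ[ℤ] Agrp →ₗ[ℤ] V) (hB : ∀ f, B f f = 0) (f g : Cgrp) :
    wedgeLift B hB (wedge f g) = B (Additive.ofMul f) (Additive.ofMul g) :=
  (LinearMap.liftBaseChange_tmul (A := ℚ) _ _ _).trans (one_smul ℚ _)

def antisymmForm {A R : Type*} [AddCommGroup A] [CommRing R] (D L : A →+ R) :
    A →ₗ[ℤ] A →ₗ[ℤ] R :=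
  (LinearMap.mul ℤ R).compl₁₂ D.toIntLinearMap L.toIntLinearMap -
    (LinearMap.mul ℤ R).compl₁₂ L.toIntLinearMap D.toIntLinearMap

theorem antisymmForm_apply {A R : Type*} [AddCommGroup A] [CommRing R] (D L : A →+ R) (f g : A) :
    antisymmForm D L f g = D f * L g - L f * D g := rfl

theorem antisymmForm_self {A R : Type*} [AddCommGroup A] [CommRing R] (D L : A →+ R) (f : A) :
    antisymmForm D L f f = 0 := by
  rw [antisymmForm_apply, mul_comm, sub_self]

theorem Cgrp.differentiableAt_log (f : Cgrp) {z : ℝ} (hz : 0 < z) :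
    DifferentiableAt ℝ (fun x => Real.log (((f : ℝ → ℝˣ) x : ℝ))) z :=
  (f.2.1.differentiableAt (isOpen_Ioi.mem_nhds hz)).log (f.2.2 z hz).ne'

theorem Cgrp.log_mul (f g : Cgrp) (x : ℝ) :
    Real.log ((((f * g : Cgrp) : ℝ → ℝˣ) x : ℝ)) =
      Real.log (((f : ℝ → ℝˣ) x : ℝ)) + Real.log (((g : ℝ → ℝˣ) x : ℝ)) :=
  Real.log_mul (Units.ne_zero _) (Units.ne_zero _)

def logAt (z : ℝ) : Agrp →+ ℝ where
  toFun f := Real.log (((f.toMul : ℝ → ℝˣ) z : ℝ))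
  map_zero' := by simp
  map_add' f g := Cgrp.log_mul f.toMul g.toMul z

def logDerivAt (z : ℝ) (hz : 0 < z) : Agrp →+ ℝ where
  toFun f := deriv (fun x => Real.log (((f.toMul : ℝ → ℝˣ) x : ℝ))) z
  map_zero' := by simp
  map_add' f g := by
    simp only [toMul_add, Cgrp.log_mul]
    exact deriv_add (Cgrp.differentiableAt_log _ hz) (Cgrp.differentiableAt_log _ hz)

/-- If `∑ cₗ (yₗ ∧ pₗ) = 0` in `⋀² C`, then
`∑ cₗ (log yₗ)'(z)·log pₗ(z) = ∑ cₗ log yₗ(z)·(log pₗ)'(z)` for all `z > 0`. -/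
theorem symmetry_from_wedge (M : ℕ) (y p : Fin M → Cgrp) (c : Fin M → ℚ)
    (h : ∑ l, c l • wedge (y l) (p l) = 0) :
    ∀ z : ℝ, 0 < z →
      ∑ l, (c l : ℝ) * deriv (fun x => Real.log (((y l : ℝ → ℝˣ) x : ℝ))) z *
          Real.log (((p l : ℝ → ℝˣ) z : ℝ)) =
      ∑ l, (c l : ℝ) * Real.log (((y l : ℝ → ℝˣ) z : ℝ)) *
          deriv (fun x => Real.log (((p l : ℝ → ℝˣ) x : ℝ))) z := by
  intro z hz
  have hvanish := congrArg (wedgeLift _ (antisymmForm_self (logDerivAt z hz) (logAt z))) h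
  simp only [map_sum, map_smul, map_zero, wedgeLift_wedge, antisymmForm_apply, Rat.smul_def] at hvanish
  rw [← sub_eq_zero, ← Finset.sum_sub_distrib, ← hvanish]
  refine Finset.sum_congr rfl fun l _ => ?_
  simp only [logDerivAt, logAt, AddMonoidHom.coe_mk, ZeroHom.coe_mk, toMul_ofMul]
  ring

end
end

section
/- Let P(y) = 1 + ∑_{s=1}^{d-1} z_s·y^s + y^d with fixed non-negative coefficients z_s, except that z_{s₀} = p(z) is a differentiable function of a real parameter z with p(z) ≥ 0. Let y: ℝ_{>0} → ℝ_{>0} be differentiable. Then d/dz [ L̃_{P}(y(z)) ] = p'(z)·∫₀^{y(z)} u^{s₀-1}/P(u) du + (1/2)·[ (d/dz log y(z))·log P(y(z)) - log(y(z))·(d/dz log P(y(z))) ]. -/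
/-!
Write `P_w(u) = P_z(u) + (p w - p z) u^{s₀}` and split `∫₀^{y w} log P_w / u` as
`∫₀^{y z} log P_w / u + ∫_{y z}^{y w} log P_z / u + ∫_{y z}^{y w} (log P_w - log P_z) / u`.
The first term is differentiated under the integral sign, with `w`-derivative
`p'(z) ∫₀^{y z} u^{s₀-1} / P_z(u)`; the second by the fundamental theorem of calculus, giving
`log P_z(y z) / y z · y'(z)`; the third is `o(w - z)` because `log P_w / u → log P_z / u` uniformly
near `y z`. All integrals exist since `P ≥ 1` on `[0, ∞)` and `P = 1 + u · (polynomial)`, so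
`0 ≤ log P(u) / u` stays bounded near `0`. The boundary term `(log y)' · log P(y)` then combines
with the derivative of `-(1/2) log y · log P(y)` into the stated formula.
-/

open Real Set Filter Topology MeasureTheory intervalIntegral Metric Asymptotics

noncomputable def rogersPoly (d : ℕ) (c : ℕ → ℝ) (u : ℝ) : ℝ :=
  1 + (∑ s ∈ Finset.Ico 1 d, c s * u ^ s) + u ^ d

section rogersPoly

variable {d : ℕ} {c : ℕ → ℝ} {u : ℝ}

theorem differentiable_rogersPoly (d : ℕ) (c : ℕ → ℝ) : Differentiable ℝ (rogersPoly d c) := by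
  unfold rogersPoly; fun_prop

theorem rogersPoly_update_eq_add {s₀ : ℕ} (hs₀ : s₀ ∈ Finset.Ico 1 d) (a b : ℝ) :
    rogersPoly d (Function.update c s₀ a) u
      = rogersPoly d (Function.update c s₀ b) u + (a - b) * u ^ s₀ := by
  have hsum : ∀ e, ∑ s ∈ Finset.Ico 1 d, Function.update c s₀ e s * u ^ s
      = e * u ^ s₀ + ∑ s ∈ (Finset.Ico 1 d).erase s₀, c s * u ^ s := fun e => by
    rw [← Finset.add_sum_erase _ _ hs₀, Function.update_self]
    congr 1
    exact Finset.sum_congr rfl fun s hs => by rw [Function.update_of_ne (Finset.ne_of_mem_erase hs)]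
  simp only [rogersPoly, hsum]
  ring

theorem one_le_rogersPoly (hc : ∀ s, 0 ≤ c s) (hu : 0 ≤ u) : 1 ≤ rogersPoly d c u := by
  have : 0 ≤ ∑ s ∈ Finset.Ico 1 d, c s * u ^ s :=
    Finset.sum_nonneg fun s _ => mul_nonneg (hc s) (pow_nonneg hu s)
  unfold rogersPoly
  linarith [pow_nonneg hu d]

theorem rogersPoly_eq_one_add_mul (hd : 1 ≤ d) :
    rogersPoly d c u = 1 + u * ((∑ s ∈ Finset.Ico 1 d, c s * u ^ (s - 1)) + u ^ (d - 1)) := by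
  have hpow : ∀ s, 1 ≤ s → u ^ s = u * u ^ (s - 1) := fun s hs => by
    rw [← pow_succ', Nat.sub_add_cancel hs]
  have hsum : ∑ s ∈ Finset.Ico 1 d, c s * u ^ s = u * ∑ s ∈ Finset.Ico 1 d, c s * u ^ (s - 1) := by
    rw [Finset.mul_sum]
    refine Finset.sum_congr rfl fun s hs => ?_
    rw [hpow s (Finset.mem_Ico.mp hs).1]; ring
  rw [rogersPoly, hsum, hpow d hd]; ring

end rogersPoly

theorem intervalIntegrable_log_one_add_mul_div {R : ℝ → ℝ} {b : ℝ} (hR : Continuous R)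
    (hR0 : ∀ u ∈ Ioc 0 b, 0 ≤ R u) (hb : 0 ≤ b) :
    IntervalIntegrable (fun u => log (1 + u * R u) / u) volume 0 b := by
  have hRm := hR.measurable
  refine (hR.intervalIntegrable 0 b).mono_fun' (Measurable.aestronglyMeasurable (by fun_prop)) ?_
  rw [uIoc_of_le hb]
  refine (ae_restrict_iff' measurableSet_Ioc).mpr (ae_of_all _ fun u hu => ?_)
  have hur : 0 ≤ u * R u := mul_nonneg hu.1.le (hR0 u hu)
  dsimp only
  rw [norm_of_nonneg (div_nonneg (log_nonneg (by linarith)) hu.1.le), div_le_iff₀ hu.1]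
  linarith [log_le_sub_one_of_pos (by linarith : 0 < 1 + u * R u)]

theorem intervalIntegrable_log_rogersPoly_div {d : ℕ} {c : ℕ → ℝ} {b : ℝ} (hd : 1 ≤ d)
    (hc : ∀ s, 0 ≤ c s) (hb : 0 ≤ b) :
    IntervalIntegrable (fun u => log (rogersPoly d c u) / u) volume 0 b := by
  simp_rw [rogersPoly_eq_one_add_mul hd]
  refine intervalIntegrable_log_one_add_mul_div (by fun_prop) (fun u hu => ?_) hb
  exact add_nonneg (Finset.sum_nonneg fun s _ => mul_nonneg (hc s) (pow_nonneg hu.1.le _))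
    (pow_nonneg hu.1.le _)

theorem abs_log_sub_log_le_abs_sub {a b : ℝ} (ha : 1 ≤ a) (hb : 1 ≤ b) :
    |log a - log b| ≤ |a - b| := by
  wlog hba : b ≤ a generalizing a b
  · rw [abs_sub_comm, abs_sub_comm a b]; exact this hb ha (le_of_not_ge hba)
  have hb0 : 0 < b := by linarith
  rw [abs_of_nonneg (sub_nonneg.mpr (log_le_log hb0 hba)), abs_of_nonneg (sub_nonneg.mpr hba),
    ← log_div (by linarith) hb0.ne']
  calc log (a / b) ≤ a / b - 1 := log_le_sub_one_of_pos (by positivity)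
    _ = (a - b) / b := by field_simp
    _ ≤ a - b := div_le_self (sub_nonneg.mpr hba) hb

theorem tendstoUniformlyOn_log_div {P : ℝ → ℝ → ℝ} {p : ℝ → ℝ} {n : ℕ} {z c : ℝ} (hn : 1 ≤ n)
    (hP : ∀ w u, P w u = P z u + (p w - p z) * u ^ n) (hP1 : ∀ w, ∀ u ∈ Ioo 0 c, 1 ≤ P w u)
    (hp : ContinuousAt p z) :
    TendstoUniformlyOn (fun w u => log (P w u) / u) (fun u => log (P z u) / u) (𝓝 z)
      (Ioo 0 c) := by
  set K := max 1 c ^ (n - 1)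
  have hK : 0 < K := by positivity
  rw [Metric.tendstoUniformlyOn_iff]
  intro ε hε
  filter_upwards [Metric.tendsto_nhds.mp hp (ε / K) (div_pos hε hK)] with w hw u hu
  rw [Real.dist_eq] at hw ⊢
  have hu0 := hu.1
  calc |log (P z u) / u - log (P w u) / u| = |log (P z u) - log (P w u)| / u := by
        rw [← sub_div, abs_div, abs_of_pos hu0]
    _ ≤ |P z u - P w u| / u :=
        div_le_div_of_nonneg_right (abs_log_sub_log_le_abs_sub (hP1 z u hu) (hP1 w u hu)) hu0.le
    _ = |p w - p z| * u ^ (n - 1) := by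
        rw [hP w u, ← Nat.sub_add_cancel hn, pow_succ, Nat.add_sub_cancel, sub_add_cancel_left,
          abs_neg, abs_mul, abs_mul, abs_of_pos hu0, abs_of_nonneg (pow_nonneg hu0.le _)]
        field_simp
    _ ≤ |p w - p z| * K := mul_le_mul_of_nonneg_left
        (pow_le_pow_left₀ hu0.le (hu.2.le.trans (le_max_right 1 c)) _) (abs_nonneg _)
    _ < ε := by rwa [← lt_div_iff₀ hK]

theorem hasDerivAt_integral_log_add_mul_pow {Q : ℝ → ℝ} {b m : ℝ} {n : ℕ} (hn : 1 ≤ n)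
    (hb : 0 ≤ b) (hQ : Measurable Q) (hm : 0 < m) (hQm : ∀ u ∈ Ioc 0 b, m ≤ Q u)
    (hint : IntervalIntegrable (fun u => log (Q u) / u) volume 0 b) :
    HasDerivAt (fun a => ∫ u in 0..b, log (Q u + a * u ^ n) / u)
      (∫ u in 0..b, u ^ (n - 1) / Q u) 0 := by
  set K := max 1 b ^ n
  have hK : 0 < K := by positivity
  have hr : 0 < m / (2 * K) := div_pos hm (mul_pos two_pos hK)
  have hpow : ∀ k ≤ n, ∀ u ∈ Ioc 0 b, u ^ k ≤ K := fun k hk u hu =>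
    (pow_le_pow_left₀ hu.1.le (hu.2.trans (le_max_right 1 b)) k).trans
      (pow_le_pow_right₀ (le_max_left 1 b) hk)
  -- `K` bounds `u ^ n` on `(0, b]`, so for `|a| < m / (2K)` the argument of `log` stays `≥ m / 2`
  have hden : ∀ a ∈ ball (0 : ℝ) (m / (2 * K)), ∀ u ∈ Ioc 0 b, m / 2 ≤ Q u + a * u ^ n := by
    intro a ha u hu
    rw [mem_ball_zero_iff, norm_eq_abs] at ha
    have : |a * u ^ n| ≤ m / 2 := calc
      |a * u ^ n| ≤ m / (2 * K) * K := by
        rw [abs_mul, abs_of_nonneg (pow_nonneg hu.1.le n)]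
        exact mul_le_mul ha.le (hpow n le_rfl u hu) (pow_nonneg hu.1.le n) hr.le
      _ = m / 2 := by field_simp
    linarith [hQm u hu, neg_abs_le (a * u ^ n)]
  have hderiv : ∀ a ∈ ball (0 : ℝ) (m / (2 * K)), ∀ u ∈ Ioc 0 b,
      HasDerivAt (fun a => log (Q u + a * u ^ n) / u) (u ^ (n - 1) / (Q u + a * u ^ n)) a := by
    intro a ha u hu
    have hpos : Q u + a * u ^ n ≠ 0 := by linarith [hden a ha u hu]
    refine ((((hasDerivAt_mul_const (u ^ n)).const_add (Q u)).log hpos).div_const u).congr_deriv ?_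
    rw [← Nat.sub_add_cancel hn, pow_succ, Nat.add_sub_cancel]
    field_simp [hu.1.ne']
  have hbound : ∀ a ∈ ball (0 : ℝ) (m / (2 * K)), ∀ u ∈ Ioc 0 b,
      ‖u ^ (n - 1) / (Q u + a * u ^ n)‖ ≤ K / (m / 2) := fun a ha u hu => by
    have hd := hden a ha u hu
    rw [norm_of_nonneg (div_nonneg (pow_nonneg hu.1.le _) (by linarith))]
    exact div_le_div₀ hK.le (hpow _ (Nat.sub_le n 1) u hu) (half_pos hm) hd
  rw [← uIoc_of_le hb] at hden hderiv hbound
  have key := hasDerivAt_integral_of_dominated_loc_of_deriv_le (μ := volume)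
    (F := fun a u => log (Q u + a * u ^ n) / u) (F' := fun a u => u ^ (n - 1) / (Q u + a * u ^ n))
    (bound := fun _ => K / (m / 2)) (ball_mem_nhds (0 : ℝ) hr)
    (.of_forall fun a => Measurable.aestronglyMeasurable (by fun_prop)) (by simpa using hint)
    (Measurable.aestronglyMeasurable (by fun_prop)) (ae_of_all _ fun u hu a ha => hbound a ha u hu)
    intervalIntegrable_const (ae_of_all _ fun u hu a ha => hderiv a ha u hu)
  simpa using key.2

theorem hasDerivAt_integral_of_tendstoUniformlyOn {g : ℝ → ℝ → ℝ} {x : ℝ → ℝ} {s : Set ℝ}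
    {a z x' H' : ℝ} (hs : s ∈ 𝓝 (x z)) (hcont : ∀ᶠ w in 𝓝 z, ContinuousOn (g w) s)
    (hint : ∀ᶠ w in 𝓝 z, IntervalIntegrable (g w) volume a (x z))
    (hunif : TendstoUniformlyOn g (g z) (𝓝 z) s)
    (hH : HasDerivAt (fun w => ∫ u in a..x z, g w u) H' z) (hx : HasDerivAt x x' z) :
    HasDerivAt (fun w => ∫ u in a..x w, g w u) (H' + g z (x z) * x') z := by
  obtain ⟨ε, hε, hball⟩ := Metric.mem_nhds_iff.mp hs
  have hIcc : ∀ᶠ w in 𝓝 z, uIcc (x z) (x w) ⊆ s := by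
    filter_upwards [hx.continuousAt.tendsto (ball_mem_nhds (x z) hε)] with w hw
    exact ((Real.ball_eq_Ioo (x z) ε ▸ ordConnected_Ioo).uIcc_subset (mem_ball_self hε) hw).trans
      hball
  have hgz : ContinuousOn (g z) (ball (x z) ε) := hcont.self_of_nhds.mono hball
  have hFTC : HasDerivAt (fun w => ∫ u in a..x w, g z u) (g z (x z) * x') z :=
    (integral_hasDerivAt_right hint.self_of_nhds
      ⟨_, ball_mem_nhds _ hε, hgz.aestronglyMeasurable measurableSet_ball⟩
      (hgz.continuousAt (ball_mem_nhds _ hε))).comp z hx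
  set R := fun w => ∫ u in x z..x w, (g w u - g z u)
  have hR : HasDerivAt R 0 z := by
    have hRo : R =o[𝓝 z] fun w => x w - x z := by
      refine isLittleO_iff.mpr fun c hc => ?_
      filter_upwards [hIcc, Metric.tendstoUniformlyOn_iff.mp hunif c hc] with w hw hwc
      rw [norm_eq_abs (x w - x z)]
      refine intervalIntegral.norm_integral_le_of_norm_le_const fun u hu => ?_
      rw [← dist_eq_norm, dist_comm]
      exact (hwc u (hw (uIoc_subset_uIcc hu))).le
    simpa [hasDerivAt_iff_isLittleO, R] using hRo.trans_isBigO hx.isBigO_sub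
  have hsplit : (fun w => ∫ u in a..x w, g w u) =ᶠ[𝓝 z] fun w =>
      (∫ u in a..x z, g w u) + ((∫ u in a..x w, g z u) - ∫ u in a..x z, g z u) + R w := by
    filter_upwards [hcont, hint, hIcc] with w hw hwa hws
    have hw' := (hw.mono hws).intervalIntegrable (μ := volume)
    have hz' := (hcont.self_of_nhds.mono hws).intervalIntegrable (μ := volume)
    rw [show R w = _ from integral_sub hw' hz', ← integral_add_adjacent_intervals hwa hw',
      ← integral_add_adjacent_intervals hint.self_of_nhds hz']
    ring
  simpa using ((hH.add (hFTC.sub_const _)).add hR).congr_of_eventuallyEq hsplit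

theorem hasDerivAt_integral_log_div {P : ℝ → ℝ → ℝ} {p y : ℝ → ℝ} {n : ℕ} {z y' : ℝ}
    (hn : 1 ≤ n) (hP : ∀ w u, P w u = P z u + (p w - p z) * u ^ n)
    (hP1 : ∀ w u, 0 ≤ u → 1 ≤ P w u) (hPc : Continuous (P z))
    (hint : ∀ w, IntervalIntegrable (fun u => log (P w u) / u) volume 0 (y z))
    (hp : DifferentiableAt ℝ p z) (hy : HasDerivAt y y' z) (hyz : 0 < y z) :
    HasDerivAt (fun w => ∫ u in 0..y w, log (P w u) / u)
      ((∫ u in 0..y z, u ^ (n - 1) / P z u) * deriv p z + log (P z (y z)) / y z * y') z := by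
  have hPc' : ∀ w, Continuous (P w) := fun w => by
    rw [show P w = fun u => P z u + (p w - p z) * u ^ n from funext (hP w)]; fun_prop
  have hH : HasDerivAt (fun w => ∫ u in 0..y z, log (P w u) / u)
      ((∫ u in 0..y z, u ^ (n - 1) / P z u) * deriv p z) z := by
    have := (hasDerivAt_integral_log_add_mul_pow hn hyz.le hPc.measurable one_pos
      (fun u hu => hP1 z u hu.1.le) (hint z)).comp_of_eq z (hp.hasDerivAt.sub_const (p z))
      (sub_self _).symm
    simpa only [Function.comp_def, ← hP] using this
  exact hasDerivAt_integral_of_tendstoUniformlyOn (g := fun w u => log (P w u) / u)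
    (Ioo_mem_nhds hyz (lt_add_one _))
    (.of_forall fun w => ((hPc' w).continuousOn.log fun u hu =>
      (one_pos.trans_le (hP1 w u hu.1.le)).ne').div continuousOn_id fun u hu => hu.1.ne')
    (.of_forall hint) (tendstoUniformlyOn_log_div hn hP (fun w u hu => hP1 w u hu.1.le)
      hp.continuousAt) hH hy

theorem deriv_rogers_higher_general (d s₀ : ℕ) (hs : 1 ≤ s₀) (hs' : s₀ ≤ d - 1)
    (zc : ℕ → ℝ) (hzc : ∀ t, 0 ≤ zc t)
    (p : ℝ → ℝ) (hp : Differentiable ℝ p) (hp0 : ∀ z, 0 ≤ p z)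
    (y : ℝ → ℝ) (hypos : ∀ z, 0 < z → 0 < y z)
    (hy : DifferentiableOn ℝ y (Set.Ioi 0))
    (P : ℝ → ℝ → ℝ)
    (hP : ∀ z u, P z u = 1 + (∑ s ∈ Finset.Ico 1 d, (if s = s₀ then p z else zc s) * u ^ s)
      + u ^ d)
    (z : ℝ) (hz : 0 < z) :
    deriv (fun w => (∫ u in (0:ℝ)..(y w), Real.log (P w u) / u)
        - (1/2) * Real.log (y w) * Real.log (P w (y w))) z
      = deriv p z * (∫ u in (0:ℝ)..(y z), u ^ (s₀ - 1) / P z u)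
        + (1/2) * (deriv (fun w => Real.log (y w)) z * Real.log (P z (y z))
          - Real.log (y z) * deriv (fun w => Real.log (P w (y w))) z) := by
  have hx : 0 < y z := hypos z hz
  have hyz : HasDerivAt y (deriv y z) z := (hy.differentiableAt (Ioi_mem_nhds hz)).hasDerivAt
  have hPr : ∀ w, P w = rogersPoly d (Function.update zc s₀ (p w)) := fun w =>
    funext fun u => by simp only [hP, rogersPoly, Function.update_apply]
  have hc : ∀ w t, 0 ≤ Function.update zc s₀ (p w) t := fun w t => by
    rw [Function.update_apply]; split_ifs <;> simp [hp0, hzc]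
  have hPz : ∀ w u, P w u = P z u + (p w - p z) * u ^ s₀ := fun w u => by
    rw [hPr, hPr, rogersPoly_update_eq_add (Finset.mem_Ico.mpr ⟨hs, by omega⟩)]
  have hP1 : ∀ w u, 0 ≤ u → 1 ≤ P w u := fun w u hu => hPr w ▸ one_le_rogersPoly (hc w) hu
  have hPd : Differentiable ℝ (P z) := hPr z ▸ differentiable_rogersPoly _ _
  have hG := hasDerivAt_integral_log_div hs hPz hP1 hPd.continuous
    (fun w => hPr w ▸ intervalIntegrable_log_rogersPoly_div (by omega) (hc w) hx.le) (hp z) hyz hx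
  have hlogy : HasDerivAt (fun w => log (y w)) ((y z)⁻¹ * deriv y z) z :=
    (hasDerivAt_log hx.ne').comp z hyz
  have hlogP : DifferentiableAt ℝ (fun w => log (P w (y w))) z := by
    have hPy : DifferentiableAt ℝ (fun w => P z (y w) + (p w - p z) * y w ^ s₀) z := by
      have := hyz.differentiableAt; fun_prop
    simp only [← hPz] at hPy
    exact hPy.log (one_pos.trans_le (hP1 z (y z) hx.le)).ne'
  rw [(hG.fun_sub ((hlogy.const_mul (1 / 2)).fun_mul hlogP.hasDerivAt)).deriv, hlogy.deriv]
  field_simp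
  ring

/-- Derivative of the higher-degree Rogers dilogarithm `L̃_{P}(y(z))` in a single varying
coefficient `z_{s₀} = p(z)` of `P`. -/
theorem deriv_rogers_higher (d s₀ : ℕ) (hd : 2 ≤ d) (hs : 1 ≤ s₀) (hs' : s₀ ≤ d - 1)
    (zc : ℕ → ℝ) (hzc : ∀ t, 0 ≤ zc t)
    (p : ℝ → ℝ) (hp : Differentiable ℝ p) (hp0 : ∀ z, 0 ≤ p z)
    (y : ℝ → ℝ) (hypos : ∀ z, 0 < z → 0 < y z)
    (hy : DifferentiableOn ℝ y (Set.Ioi 0))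
    (P : ℝ → ℝ → ℝ)
    (hP : ∀ z u, P z u = 1 + (∑ s ∈ Finset.Ico 1 d, (if s = s₀ then p z else zc s) * u ^ s)
      + u ^ d)
    (z : ℝ) (hz : 0 < z) :
    deriv (fun w => (∫ u in (0:ℝ)..(y w), Real.log (P w u) / u)
        - (1/2) * Real.log (y w) * Real.log (P w (y w))) z
      = deriv p z * (∫ u in (0:ℝ)..(y z), u ^ (s₀ - 1) / P z u)
        + (1/2) * (deriv (fun w => Real.log (y w)) z * Real.log (P z (y z))
          - Real.log (y z) * deriv (fun w => Real.log (P w (y w))) z) :=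
  deriv_rogers_higher_general d s₀ hs hs' zc hzc p hp hp0 y hypos hy P hP z hz
end
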